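/- Truncated Bernoulli–Carlitz numbers via associated Stirling–Carlitz numbers of the second kind: for every integer N ≥ 1 and every n ≥ 1, BC_{N,n} = Π(n) Σ_{k=1}^{n} (n+1 choose k+1) · ((−D_N)^k Π(k)/Π(n + k r^N)) · {n + k r^N brace k}_{C,≥N}. -/

import Mathlib

/-!
Carlitz module: `Fq` is a finite field with `r = Fintype.card Fq` elements (so `r` is a
power of a prime `p`), and `K = Fq(T)` is the field of rational functions over `Fq`.
-/

noncomputable section

variable (Fq : Type*) [Field Fq] [Fintype Fq]

/-- `r`, the number of elements of the finite field `Fq` (a prime power). -/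
def rq : ℕ := Fintype.card Fq

/-- `[i] = T^{r^i} − T` in `K = Fq(T)`. -/
def carlitzBracket (i : ℕ) : RatFunc Fq := RatFunc.X ^ rq Fq ^ i - RatFunc.X

/-- `D_0 = 1`, `D_i = [i]·D_{i−1}^r`. -/
def carlitzD : ℕ → RatFunc Fq
  | 0 => 1
  | i + 1 => carlitzBracket Fq (i + 1) * carlitzD i ^ rq Fq

/-- `L_0 = 1`, `L_i = [i]·L_{i−1}`. -/
def carlitzL : ℕ → RatFunc Fq
  | 0 => 1
  | i + 1 => carlitzBracket Fq (i + 1) * carlitzL i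

/-- The Carlitz factorial `Π(i) = ∏_j D_j^{c_j}`, where `i = Σ_j c_j r^j` with
`0 ≤ c_j < r` is the base-`r` expansion of `i`. -/
def carlitzPi (i : ℕ) : RatFunc Fq :=
  ∏ j ∈ Finset.range (i + 1), carlitzD Fq j ^ (Nat.digits (rq Fq) i).getD j 0

/-- The power series `Σ_{j=0}^∞ (D_N/D_{N+j}) x^{r^{N+j} − r^N}`, i.e.
`(e_C(x) − Σ_{i=0}^{N−1} x^{r^i}/D_i)·D_N/x^{r^N}`; it has constant term `1`. -/
def bcSeries (N : ℕ) : PowerSeries (RatFunc Fq) :=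
  PowerSeries.mk fun m => ∑ j ∈ Finset.range (m + 1),
    if m = rq Fq ^ (N + j) - rq Fq ^ N then carlitzD Fq N / carlitzD Fq (N + j) else 0

/-- The truncated Bernoulli–Carlitz number `BC_{N,n}`: `BC_{N,n}/Π(n)` is the `n`-th
coefficient of the multiplicative inverse of the power series
`Σ_{j=0}^∞ (D_N/D_{N+j}) x^{r^{N+j} − r^N}`. -/
def truncBC (N n : ℕ) : RatFunc Fq :=
  carlitzPi Fq n * PowerSeries.coeff n (bcSeries Fq N)⁻¹

/-- The power series `Σ_{j=0}^∞ (−1)^j (L_N/L_{N+j}) x^{r^{N+j} − r^N}`, i.e.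
`(log_C(x) − Σ_{i=0}^{N−1} (−1)^i x^{r^i}/L_i)·(−1)^N L_N/x^{r^N}`;
it has constant term `1`. -/
def ccSeries (N : ℕ) : PowerSeries (RatFunc Fq) :=
  PowerSeries.mk fun m => ∑ j ∈ Finset.range (m + 1),
    if m = rq Fq ^ (N + j) - rq Fq ^ N then
      (-1) ^ j * carlitzL Fq N / carlitzL Fq (N + j) else 0

/-- The truncated Cauchy–Carlitz number `CC_{N,n}`: `CC_{N,n}/Π(n)` is the `n`-th
coefficient of the multiplicative inverse of the power series
`Σ_{j=0}^∞ (−1)^j (L_N/L_{N+j}) x^{r^{N+j} − r^N}`. -/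
def truncCC (N n : ℕ) : RatFunc Fq :=
  carlitzPi Fq n * PowerSeries.coeff n (ccSeries Fq N)⁻¹

/-- The tail `e_C(z) − 𝓔_{N−1}(z) = Σ_{i=N}^∞ z^{r^i}/D_i` of the Carlitz exponential. -/
def carlitzExpTail (N : ℕ) : PowerSeries (RatFunc Fq) :=
  PowerSeries.mk fun m => ∑ j ∈ Finset.range (m + 1),
    if m = rq Fq ^ (N + j) then (carlitzD Fq (N + j))⁻¹ else 0

/-- The associated Stirling–Carlitz number of the second kind `{n brace k}_{C,≥N}`,
defined by `(e_C(z) − 𝓔_{N−1}(z))^k/Π(k) = Σ_n {n brace k}_{C,≥N} z^n/Π(n)`. -/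
def stirling2C (N k n : ℕ) : RatFunc Fq :=
  carlitzPi Fq n / carlitzPi Fq k * PowerSeries.coeff n (carlitzExpTail Fq N ^ k)

/-- The tail `log_C(z) − 𝓕_{N−1}(z) = Σ_{i=N}^∞ (−1)^i z^{r^i}/L_i` of the Carlitz
logarithm. -/
def carlitzLogTail (N : ℕ) : PowerSeries (RatFunc Fq) :=
  PowerSeries.mk fun m => ∑ j ∈ Finset.range (m + 1),
    if m = rq Fq ^ (N + j) then (-1) ^ (N + j) * (carlitzL Fq (N + j))⁻¹ else 0

/-- The associated Stirling–Carlitz number of the first kind `{n brack k}_{C,≥N}`,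
defined by `(log_C(z) − 𝓕_{N−1}(z))^k/Π(k) = Σ_n {n brack k}_{C,≥N} z^n/Π(n)`. -/
def stirling1C (N k n : ℕ) : RatFunc Fq :=
  carlitzPi Fq n / carlitzPi Fq k * PowerSeries.coeff n (carlitzLogTail Fq N ^ k)

/-!
Write `f` for `bcSeries N`, so that `e_C(x) − 𝓔_{N−1}(x) = x^{r^N} f(x) / D_N`. Expanding
`1 − (1 − f)^{n+1}` binomially gives `f · Σ_{k=0}^n (−1)^k C(n+1, k+1) f^k = 1 − (1 − f)^{n+1}`,
and `(1 − f)^{n+1}` is divisible by `x^{n+1}` because `f` has constant term `1`. Hence the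
`n`-th coefficient of `f⁻¹` is `Σ_{k=1}^n (−1)^k C(n+1, k+1) [x^n] f^k`, and
`[x^n] f^k = D_N^k [x^{n + k r^N}] (e_C − 𝓔_{N−1})^k`, which is a Stirling–Carlitz number.
-/

theorem mul_sum_neg_one_pow_choose_mul_pow {R : Type*} [CommRing R] (x : R) (n : ℕ) :
    x * ∑ k ∈ Finset.range (n + 1), (-1) ^ k * ((n + 1).choose (k + 1) : R) * x ^ k =
      1 - (1 - x) ^ (n + 1) := by
  have hbinom : (1 - x) ^ (n + 1) =
      1 + ∑ k ∈ Finset.range (n + 1), (-x) ^ (k + 1) * ((n + 1).choose (k + 1) : R) := by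
    rw [sub_eq_neg_add, add_pow, Finset.sum_range_succ', add_comm]
    simp
  rw [hbinom, Finset.mul_sum, sub_add_cancel_left, ← Finset.sum_neg_distrib]
  refine Finset.sum_congr rfl fun k _ => ?_
  rw [neg_pow x]
  ring

namespace PowerSeries

theorem coeff_inv_eq_sum_choose {K : Type*} [Field K] {f : K⟦X⟧} (hf : constantCoeff f = 1)
    {n : ℕ} (hn : n ≠ 0) :
    coeff n f⁻¹ =
      ∑ k ∈ Finset.Icc 1 n, (-1) ^ k * ((n + 1).choose (k + 1) : K) * coeff n (f ^ k) := by
  have hsum : f⁻¹ - f⁻¹ * (1 - f) ^ (n + 1) =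
      ∑ k ∈ Finset.range (n + 1), C ((-1) ^ k * ((n + 1).choose (k + 1) : K)) * f ^ k := by
    rw [← mul_one_sub, ← mul_sum_neg_one_pow_choose_mul_pow, ← mul_assoc,
      PowerSeries.inv_mul_cancel f (by simp [hf]), one_mul]
    simp only [map_mul, map_pow, map_neg, map_one, map_natCast]
  have hvanish : coeff n (f⁻¹ * (1 - f) ^ (n + 1)) = 0 := by
    have hX : X ∣ 1 - f := X_dvd_iff.mpr (by simp [hf])
    exact X_pow_dvd_iff.mp (dvd_mul_of_dvd_right (pow_dvd_pow_of_dvd hX _) _) n n.lt_succ_self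
  have hcoeff := congrArg (coeff n) hsum
  rw [map_sub, hvanish, sub_zero, map_sum, Finset.range_eq_Ico,
    Finset.sum_eq_sum_Ico_succ_bot (by omega), zero_add, Finset.Ico_add_one_right_eq_Icc] at hcoeff
  simpa only [coeff_C_mul, pow_zero, coeff_one, if_neg hn, mul_zero, zero_add] using hcoeff

end PowerSeries

theorem Nat.pow_add_le_pow_add {b : ℕ} (hb : 1 < b) (N j : ℕ) : b ^ N + j ≤ b ^ (N + j) := by
  have hj : j + 1 ≤ b ^ j := Nat.lt_pow_self hb
  have hN : 1 ≤ b ^ N := Nat.one_le_pow _ _ (by omega)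
  calc b ^ N + j ≤ b ^ N * (j + 1) := by nlinarith
    _ ≤ b ^ N * b ^ j := Nat.mul_le_mul_left _ hj
    _ = b ^ (N + j) := (pow_add b N j).symm

theorem one_lt_rq : 1 < rq Fq := Fintype.one_lt_card

theorem carlitzBracket_ne_zero {i : ℕ} (hi : i ≠ 0) : carlitzBracket Fq i ≠ 0 := by
  have := RatFunc.algebraMap_ne_zero
    (FiniteField.X_pow_card_pow_sub_X_ne_zero Fq hi (one_lt_rq Fq))
  rwa [map_sub, map_pow, RatFunc.algebraMap_X] at this

theorem carlitzD_ne_zero (i : ℕ) : carlitzD Fq i ≠ 0 := by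
  induction i with
  | zero => exact one_ne_zero
  | succ i ih => exact mul_ne_zero (carlitzBracket_ne_zero Fq i.succ_ne_zero) (pow_ne_zero _ ih)

theorem carlitzPi_ne_zero (i : ℕ) : carlitzPi Fq i ≠ 0 :=
  Finset.prod_ne_zero_iff.mpr fun j _ => pow_ne_zero _ (carlitzD_ne_zero Fq j)

theorem constantCoeff_bcSeries (N : ℕ) : PowerSeries.constantCoeff (bcSeries Fq N) = 1 := by
  rw [← PowerSeries.coeff_zero_eq_constantCoeff_apply, bcSeries, PowerSeries.coeff_mk,
    Finset.sum_range_one, if_pos (by simp), add_zero, div_self (carlitzD_ne_zero Fq N)]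

theorem carlitzExpTail_eq_X_pow_mul_bcSeries (N : ℕ) :
    carlitzExpTail Fq N =
      PowerSeries.X ^ rq Fq ^ N * PowerSeries.C (carlitzD Fq N)⁻¹ * bcSeries Fq N := by
  have hle (j : ℕ) := Nat.pow_add_le_pow_add (one_lt_rq Fq) N j
  ext m
  rw [mul_assoc, PowerSeries.coeff_X_pow_mul', PowerSeries.coeff_C_mul]
  simp only [carlitzExpTail, bcSeries, PowerSeries.coeff_mk]
  split_ifs with hm
  · have hsupport (j : ℕ) (hj : m = rq Fq ^ (N + j)) : j < m - rq Fq ^ N + 1 := by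
      have := hle j; omega
    rw [Finset.mul_sum, ← Finset.sum_subset (Finset.range_subset_range.mpr (by omega))
      fun j _ hj => if_neg fun h => hj (Finset.mem_range.mpr (hsupport j h))]
    refine Finset.sum_congr rfl fun j _ => ?_
    have := hle j
    by_cases h : m = rq Fq ^ (N + j)
    · rw [if_pos h, if_pos (by omega), div_eq_mul_inv,
        inv_mul_cancel_left₀ (carlitzD_ne_zero Fq N)]
    · rw [if_neg h, if_neg (by omega), mul_zero]
  · exact Finset.sum_eq_zero fun j _ => if_neg fun h => by have := hle j; omega

theorem coeff_carlitzExpTail_pow (N n k : ℕ) :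
    PowerSeries.coeff (n + k * rq Fq ^ N) (carlitzExpTail Fq N ^ k) =
      (carlitzD Fq N)⁻¹ ^ k * PowerSeries.coeff n (bcSeries Fq N ^ k) := by
  rw [carlitzExpTail_eq_X_pow_mul_bcSeries, mul_pow, mul_pow, ← pow_mul, mul_comm _ k,
    ← map_pow, mul_assoc, PowerSeries.coeff_X_pow_mul, PowerSeries.coeff_C_mul]

theorem truncBC_eq_sum_stirling2C (N n : ℕ) (hn : 1 ≤ n) :
    truncBC Fq N n =
      carlitzPi Fq n * ∑ k ∈ Finset.Icc 1 n,
        ((n + 1).choose (k + 1) : RatFunc Fq) *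
          ((-carlitzD Fq N) ^ k * carlitzPi Fq k / carlitzPi Fq (n + k * rq Fq ^ N)) *
          stirling2C Fq N k (n + k * rq Fq ^ N) := by
  rw [truncBC, PowerSeries.coeff_inv_eq_sum_choose (constantCoeff_bcSeries Fq N)
    (Nat.one_le_iff_ne_zero.mp hn)]
  congr 1
  refine Finset.sum_congr rfl fun k _ => ?_
  have := carlitzPi_ne_zero Fq (n + k * rq Fq ^ N)
  have := carlitzPi_ne_zero Fq k
  have := carlitzD_ne_zero Fq N
  rw [stirling2C, coeff_carlitzExpTail_pow, neg_pow, inv_pow]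
  field_simp
  ring

end
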